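/- arXiv:2303.16489 — 3 statements merged into one kernel-verified Lean document; each statement's English description precedes it below -/
import Mathlib

section
/- Let S = {z ∈ ℂ : |Im z| < π/2} be the standard horizontal strip and let G be the infinitesimal generator of a semigroup (F_t)_{t≥0} on S whose Denjoy–Wolff point is the prime end +∞, i.e. F_t(z) → ∞ locally uniformly on S as t → ∞ with Re F_t(z) → +∞. Then there exists a holomorphic function q : S → ℂ with Re q(z) ≥ 0 for all z ∈ S such that G(z) = e^{−z} q(z) for all z ∈ S. -/
open Filter MeasureTheory Set Metric

noncomputable section

variable {E : Type*} [NormedAddCommGroup E] [NormedSpace ℂ E]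

/-- Continuity of `t ↦ F t` on `[0,∞)` with respect to locally uniform convergence on `D`. -/
def ContLocUnifOn (D : Set E) (F : ℝ → E → E) : Prop :=
  ∀ t₀ ∈ Set.Ici (0 : ℝ),
    TendstoLocallyUniformlyOn F (F t₀) (nhdsWithin t₀ (Set.Ici 0)) D

/-- `(F t)_{t≥0}` is a semigroup of holomorphic self-maps of `D`:
`F 0 = id`, `F (t+s) = F s ∘ F t`, and `t ↦ F t` is continuous with respect to
locally uniform convergence on `D`. -/
def IsHoloSemigroupOn (D : Set E) (F : ℝ → E → E) : Prop :=
  (∀ t : ℝ, 0 ≤ t → Set.MapsTo (F t) D D ∧ DifferentiableOn ℂ (F t) D) ∧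
  (∀ z ∈ D, F 0 z = z) ∧
  (∀ s t : ℝ, 0 ≤ s → 0 ≤ t → ∀ z ∈ D, F (t + s) z = F s (F t z)) ∧
  ContLocUnifOn D F

/-- `G` is the infinitesimal generator of the semigroup `F` on `D`, i.e.
`G(z) = lim_{t↓0} (F t z - z)/t` locally uniformly on `D`. -/
def IsGeneratorOf (D : Set E) (F : ℝ → E → E) (G : E → E) : Prop :=
  IsHoloSemigroupOn D F ∧
  TendstoLocallyUniformlyOn (fun (t : ℝ) (z : E) => t⁻¹ • (F t z - z)) G
    (nhdsWithin 0 (Set.Ioi 0)) D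

/-- `G` is an infinitesimal generator on `D`. -/
def IsInfGen (D : Set E) (G : E → E) : Prop :=
  ∃ F : ℝ → E → E, IsGeneratorOf D F G

/-- `J` is a nonlinear resolvent of `G` at time `t` on `D`: a holomorphic self-map
of `D` with `J w - t • G (J w) = w` on `D`. -/
def IsResolventAt (D : Set E) (G : E → E) (t : ℝ) (J : E → E) : Prop :=
  Set.MapsTo J D D ∧ DifferentiableOn ℂ J D ∧ ∀ w ∈ D, J w - t • G (J w) = w

/-- `(f t)_{t≥0}` is a decreasing Loewner chain on `D`. -/
def IsDecLoewnerChain (D : Set E) (f : ℝ → E → E) : Prop :=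
  (∀ t : ℝ, 0 ≤ t →
      Set.MapsTo (f t) D D ∧ DifferentiableOn ℂ (f t) D ∧ Set.InjOn (f t) D) ∧
  (∀ z ∈ D, f 0 z = z) ∧
  (∀ s t : ℝ, 0 ≤ s → s ≤ t → f t '' D ⊆ f s '' D) ∧
  ContLocUnifOn D f

open Complex ComplexConjugate Topology

open scoped Real

/-!
Under `z ↦ exp (-z)` the strip becomes the right half-plane `H` and the Denjoy–Wolff point `+∞`
becomes the boundary point `0`. For `t > 0` the orbit `exp (-F (n t) z)` of the transported map
`F t` tends to `0`, and the Schwarz–Pick lemma for `H`, applied along this orbit, gives Julia's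
lemma at `0`: `Re (1 / w)` does not decrease, that is `Re (exp z) ≤ Re (exp (F t z))`.
Differentiating at `t = 0` yields `0 ≤ Re (exp z * G z)`, so `q = exp · * G` works.
-/

lemma frequently_succ_le_of_tendsto_zero {a : ℕ → ℝ} (ha : ∀ n, 0 < a n)
    (h : Tendsto a atTop (𝓝 0)) : ∃ᶠ n in atTop, a (n + 1) ≤ a n := by
  intro hev
  obtain ⟨N, hN⟩ := eventually_atTop.1 hev
  have hmono : Monotone fun k ↦ a (k + N) :=
    monotone_nat_of_le_succ fun k ↦ by
      simpa [add_right_comm] using (not_le.1 (hN (k + N) (by omega))).le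
  have : a N ≤ 0 :=
    ge_of_tendsto' ((tendsto_add_atTop_iff_nat N).2 h) fun k ↦ by simpa using hmono k.zero_le
  exact (ha N).not_ge this

namespace Complex

lemma normSq_sub_eq_normSq_add_conj_sub (z w : ℂ) :
    normSq (z - w) = normSq (z + conj w) - 4 * z.re * w.re := by
  simp only [normSq_apply, add_re, add_im, sub_re, sub_im, conj_re, conj_im]
  ring

lemma add_conj_ne_zero {z w : ℂ} (hz : 0 < z.re) (hw : 0 < w.re) : z + conj w ≠ 0 := by
  intro h
  have := congrArg re h
  simp only [add_re, conj_re, zero_re] at this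
  linarith

lemma norm_sub_lt_norm_add_conj {z w : ℂ} (hz : 0 < z.re) (hw : 0 < w.re) :
    ‖z - w‖ < ‖z + conj w‖ := by
  rw [← sq_lt_sq₀ (norm_nonneg _) (norm_nonneg _), Complex.sq_norm, Complex.sq_norm,
    normSq_sub_eq_normSq_add_conj_sub]
  nlinarith

/-- Together with `discToHalfPlane a`, the Möbius maps between the right half-plane and the unit disc that
exchange `a` and `0`. -/
def halfPlaneToDisc (a w : ℂ) : ℂ := (w - a) / (w + conj a)

def discToHalfPlane (a ζ : ℂ) : ℂ := (a + conj a * ζ) / (1 - ζ)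

variable {a : ℂ}

lemma norm_halfPlaneToDisc_lt_one (ha : 0 < a.re) {w : ℂ} (hw : 0 < w.re) :
    ‖halfPlaneToDisc a w‖ < 1 := by
  rw [halfPlaneToDisc, norm_div, div_lt_one (norm_pos_iff.2 (add_conj_ne_zero hw ha))]
  exact norm_sub_lt_norm_add_conj hw ha

lemma halfPlaneToDisc_self : halfPlaneToDisc a a = 0 := by
  simp [halfPlaneToDisc]

lemma re_discToHalfPlane (ζ : ℂ) :
    (discToHalfPlane a ζ).re = a.re * (1 - normSq ζ) / normSq (1 - ζ) := by
  simp only [discToHalfPlane, div_re, normSq_apply, add_re, add_im, sub_re, sub_im, mul_re,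
    mul_im, conj_re, conj_im, one_re, one_im]
  ring

lemma re_discToHalfPlane_pos (ha : 0 < a.re) {ζ : ℂ} (hζ : ‖ζ‖ < 1) :
    0 < (discToHalfPlane a ζ).re := by
  have hζ1 : 1 - ζ ≠ 0 := sub_ne_zero.2 (ne_of_apply_ne norm (by rw [norm_one]; exact hζ.ne'))
  rw [re_discToHalfPlane, normSq_eq_norm_sq]
  have : ‖ζ‖ ^ 2 < 1 := by nlinarith [norm_nonneg ζ]
  exact div_pos (mul_pos ha (by linarith)) (normSq_pos.2 hζ1)

lemma discToHalfPlane_zero : discToHalfPlane a 0 = a := by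
  simp [discToHalfPlane]

lemma discToHalfPlane_halfPlaneToDisc (ha : 0 < a.re) {w : ℂ} (hw : 0 < w.re) :
    discToHalfPlane a (halfPlaneToDisc a w) = w := by
  have h₁ := add_conj_ne_zero hw ha
  have h₂ := add_conj_ne_zero ha ha
  rw [discToHalfPlane, halfPlaneToDisc]
  field_simp
  rw [div_eq_iff (by contrapose! h₂; linear_combination h₂)]
  ring

lemma mapsTo_halfPlaneToDisc (ha : 0 < a.re) :
    MapsTo (halfPlaneToDisc a) {w | 0 < w.re} (ball 0 1) := fun _ hw ↦
  mem_ball_zero_iff.2 (norm_halfPlaneToDisc_lt_one ha hw)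

lemma mapsTo_discToHalfPlane (ha : 0 < a.re) :
    MapsTo (discToHalfPlane a) (ball 0 1) {w | 0 < w.re} := fun _ hζ ↦
  re_discToHalfPlane_pos ha (mem_ball_zero_iff.1 hζ)

lemma differentiableOn_halfPlaneToDisc (ha : 0 < a.re) :
    DifferentiableOn ℂ (halfPlaneToDisc a) {w | 0 < w.re} := fun _ hw ↦ by
  unfold halfPlaneToDisc
  fun_prop (disch := exact add_conj_ne_zero hw ha)

lemma differentiableOn_discToHalfPlane : DifferentiableOn ℂ (discToHalfPlane a) (ball 0 1) :=
  fun ζ hζ ↦ by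
    have hζ1 : 1 - ζ ≠ 0 := sub_ne_zero.2 (ne_of_apply_ne norm
      (by rw [norm_one]; exact (mem_ball_zero_iff.1 hζ).ne'))
    unfold discToHalfPlane
    fun_prop (disch := exact hζ1)

/-- The Schwarz–Pick lemma for the right half-plane. -/
theorem norm_sub_mul_norm_add_conj_le_of_mapsTo {g : ℂ → ℂ}
    (hg : MapsTo g {w | 0 < w.re} {w | 0 < w.re}) (hd : DifferentiableOn ℂ g {w | 0 < w.re})
    {v w : ℂ} (hv : 0 < v.re) (hw : 0 < w.re) :
    ‖g w - g v‖ * ‖w + conj v‖ ≤ ‖w - v‖ * ‖g w + conj (g v)‖ := by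
  have hgv : 0 < (g v).re := hg hv
  have hψd : DifferentiableOn ℂ (halfPlaneToDisc (g v) ∘ g ∘ discToHalfPlane v) (ball 0 1) :=
    (differentiableOn_halfPlaneToDisc hgv).comp (hd.comp differentiableOn_discToHalfPlane
      (mapsTo_discToHalfPlane hv)) (hg.comp (mapsTo_discToHalfPlane hv))
  have hψmaps : MapsTo (halfPlaneToDisc (g v) ∘ g ∘ discToHalfPlane v) (ball 0 1)
      (closedBall 0 1) :=
    (mapsTo_halfPlaneToDisc hgv).comp (hg.comp (mapsTo_discToHalfPlane hv))
      |>.mono_right ball_subset_closedBall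
  have hψ0 : (halfPlaneToDisc (g v) ∘ g ∘ discToHalfPlane v) 0 = 0 := by
    simp [discToHalfPlane_zero, halfPlaneToDisc_self]
  have := norm_le_norm_of_mapsTo_ball hψd hψmaps hψ0 (norm_halfPlaneToDisc_lt_one hv hw)
  simp only [Function.comp_apply, discToHalfPlane_halfPlaneToDisc hv hw] at this
  rwa [halfPlaneToDisc, halfPlaneToDisc, norm_div, norm_div,
    div_le_div_iff₀ (norm_pos_iff.2 (add_conj_ne_zero (hg hw) hgv))
      (norm_pos_iff.2 (add_conj_ne_zero hw hv))] at this

theorem re_mul_re_mul_normSq_le_of_mapsTo {g : ℂ → ℂ}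
    (hg : MapsTo g {w | 0 < w.re} {w | 0 < w.re}) (hd : DifferentiableOn ℂ g {w | 0 < w.re})
    {v w : ℂ} (hv : 0 < v.re) (hw : 0 < w.re) :
    w.re * v.re * normSq (g w + conj (g v)) ≤ (g w).re * (g v).re * normSq (w + conj v) := by
  have h := pow_le_pow_left₀ (by positivity)
    (norm_sub_mul_norm_add_conj_le_of_mapsTo hg hd hv hw) 2
  simp only [mul_pow, Complex.sq_norm, normSq_sub_eq_normSq_add_conj_sub] at h
  linarith

/-- Julia's lemma at the boundary point `0` of the right half-plane, for a map having an orbit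
that tends to `0`: the horodisks `c < Re (1 / w)` at `0` are mapped into themselves. -/
theorem re_inv_le_re_inv_of_mapsTo {g : ℂ → ℂ}
    (hg : MapsTo g {w | 0 < w.re} {w | 0 < w.re}) (hd : DifferentiableOn ℂ g {w | 0 < w.re})
    {b : ℕ → ℂ} (hb : ∀ n, 0 < (b n).re) (hgb : ∀ n, g (b n) = b (n + 1))
    (hb0 : Tendsto b atTop (𝓝 0)) {w : ℂ} (hw : 0 < w.re) :
    (w⁻¹).re ≤ ((g w)⁻¹).re := by
  have hgw : 0 < (g w).re := hg hw
  have hlim (c : ℂ) : Tendsto (fun n ↦ normSq (c + conj (b n))) atTop (𝓝 (normSq c)) := by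
    have : Continuous fun ζ ↦ normSq (c + conj ζ) := by fun_prop
    simpa [Function.comp_def] using (this.tendsto 0).comp hb0
  -- Schwarz–Pick at `w` and `b n` carries the factor `Re (b n) / Re (b (n + 1))`, which is at
  -- least `1` infinitely often because `Re (b n) → 0`.
  have hfreq : ∃ᶠ n in atTop,
      w.re * normSq (g w + conj (b (n + 1))) ≤ (g w).re * normSq (w + conj (b n)) := by
    refine (frequently_succ_le_of_tendsto_zero (fun n ↦ hb n)
      ((continuous_re.tendsto 0).comp hb0)).mono fun n hn ↦ ?_
    have key := re_mul_re_mul_normSq_le_of_mapsTo hg hd (hb n) hw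
    rw [hgb] at key
    refine le_of_mul_le_mul_left ?_ (hb (n + 1))
    nlinarith [mul_le_mul_of_nonneg_left hn
      (mul_nonneg hw.le (normSq_nonneg (g w + conj (b (n + 1)))))]
  have := le_of_tendsto_of_tendsto_of_frequently
    (((tendsto_add_atTop_iff_nat 1).2 (hlim (g w))).const_mul w.re)
    ((hlim w).const_mul (g w).re) hfreq
  rw [inv_re, inv_re, div_le_div_iff₀ (normSq_pos.2 (ne_of_apply_ne re hw.ne'))
    (normSq_pos.2 (ne_of_apply_ne re hgw.ne'))]
  linarith

lemma isOpen_abs_im_lt (c : ℝ) : IsOpen {z : ℂ | |z.im| < c} :=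
  isOpen_lt (continuous_abs.comp continuous_im) continuous_const

lemma re_exp_neg_pos {z : ℂ} (hz : |z.im| < π / 2) : 0 < (exp (-z)).re := by
  rw [exp_re, neg_im, Real.cos_neg]
  exact mul_pos (Real.exp_pos _) (Real.cos_pos_of_mem_Ioo (abs_lt.1 hz))

lemma abs_im_neg_log_lt {w : ℂ} (hw : 0 < w.re) : |(-log w).im| < π / 2 := by
  rw [neg_im, log_im, abs_neg]
  exact abs_arg_lt_pi_div_two_iff.2 (Or.inl hw)

lemma neg_log_exp_neg {z : ℂ} (hz : |z.im| < π / 2) : -log (exp (-z)) = z := by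
  have := abs_lt.1 hz
  rw [log_exp (by rw [neg_im]; linarith [Real.pi_pos]) (by rw [neg_im]; linarith [Real.pi_pos]),
    neg_neg]

/-- A self-map `f` of the strip `|Im z| < π / 2`, transported to the right half-plane by the
biholomorphism `z ↦ exp (-z)`. -/
def expNegConj (f : ℂ → ℂ) (w : ℂ) : ℂ := exp (-f (-log w))

lemma expNegConj_exp_neg (f : ℂ → ℂ) {z : ℂ} (hz : |z.im| < π / 2) :
    expNegConj f (exp (-z)) = exp (-f z) := by
  rw [expNegConj, neg_log_exp_neg hz]

variable {f : ℂ → ℂ}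

lemma mapsTo_expNegConj (hf : MapsTo f {z | |z.im| < π / 2} {z | |z.im| < π / 2}) :
    MapsTo (expNegConj f) {w | 0 < w.re} {w | 0 < w.re} := fun _ hw ↦
  re_exp_neg_pos (hf (abs_im_neg_log_lt hw))

lemma differentiableOn_expNegConj (hf : DifferentiableOn ℂ f {z | |z.im| < π / 2}) :
    DifferentiableOn ℂ (expNegConj f) {w | 0 < w.re} := fun w hw ↦ by
  have hlog : DifferentiableAt ℂ log w := differentiableAt_log (Or.inl hw)
  have hfw : DifferentiableAt ℂ f (-log w) :=
    hf.differentiableAt ((isOpen_abs_im_lt _).mem_nhds (abs_im_neg_log_lt hw))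
  exact (hfw.comp w hlog.neg).neg.cexp.differentiableWithinAt

end Complex

theorem IsHoloSemigroupOn.re_exp_le_re_exp {F : ℝ → ℂ → ℂ}
    (hF : IsHoloSemigroupOn {z : ℂ | |z.im| < π / 2} F) {z : ℂ} (hz : |z.im| < π / 2)
    (hre : Tendsto (fun s ↦ (F s z).re) atTop atTop) {t : ℝ} (ht : 0 < t) :
    (exp z).re ≤ (exp (F t z)).re := by
  obtain ⟨hmaps, hdiff⟩ := hF.1 t ht.le
  have horbit (n : ℕ) : |(F (n * t) z).im| < π / 2 := (hF.1 _ (by positivity)).1 hz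
  have hstep (n : ℕ) : expNegConj (F t) (exp (-F (n * t) z)) = exp (-F ((n + 1 : ℕ) * t) z) := by
    rw [expNegConj_exp_neg _ (horbit n), ← hF.2.2.1 t _ ht.le (by positivity) z hz]
    push_cast
    ring_nf
  have hlim : Tendsto (fun n : ℕ ↦ exp (-F (n * t) z)) atTop (𝓝 0) := by
    rw [tendsto_zero_iff_norm_tendsto_zero]
    simp only [norm_exp, neg_re]
    exact Real.tendsto_exp_atBot.comp (tendsto_neg_atTop_atBot.comp
      (hre.comp (tendsto_natCast_atTop_atTop.atTop_mul_const ht)))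
  have := re_inv_le_re_inv_of_mapsTo (mapsTo_expNegConj hmaps) (differentiableOn_expNegConj hdiff)
    (fun n ↦ re_exp_neg_pos (horbit n)) hstep hlim (re_exp_neg_pos hz)
  rwa [expNegConj_exp_neg _ hz, ← exp_neg, ← exp_neg, neg_neg, neg_neg] at this

theorem IsGeneratorOf.hasDerivWithinAt {D : Set E} {F : ℝ → E → E} {G : E → E}
    (h : IsGeneratorOf D F G) {z : E} (hz : z ∈ D) :
    HasDerivWithinAt (fun t ↦ F t z) (G z) (Ioi 0) 0 := by
  rw [hasDerivWithinAt_iff_tendsto_slope, sdiff_singleton_eq_self self_notMem_Ioi]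
  have hslope : slope (fun t ↦ F t z) 0 = fun t ↦ t⁻¹ • (F t z - z) := by
    ext t
    rw [slope_def_module, sub_zero, h.1.2.1 z hz]
  exact hslope ▸ h.2.tendsto_at hz

theorem IsGeneratorOf.differentiableOn {D : Set ℂ} {F : ℝ → ℂ → ℂ} {G : ℂ → ℂ}
    (h : IsGeneratorOf D F G) (hD : IsOpen D) : DifferentiableOn ℂ G D :=
  h.2.differentiableOn (eventually_mem_nhdsWithin.mono fun t ht ↦
    ((h.1.1 t ht.le).2.sub differentiableOn_id).const_smul _) hD

lemma re_nonneg_of_hasDerivWithinAt_Ioi {f : ℝ → ℂ} {f' : ℂ} {a : ℝ}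
    (hf : HasDerivWithinAt f f' (Ioi a) a) (hmono : ∀ t > a, (f a).re ≤ (f t).re) :
    0 ≤ f'.re := by
  rw [hasDerivWithinAt_iff_tendsto_slope, sdiff_singleton_eq_self self_notMem_Ioi] at hf
  refine ge_of_tendsto ((continuous_re.tendsto _).comp hf)
    (eventually_mem_nhdsWithin.mono fun t (ht : a < t) ↦ ?_)
  simp only [Function.comp_apply, slope_def_module, real_smul, re_ofReal_mul, sub_re]
  exact mul_nonneg (inv_nonneg.2 (sub_pos.2 ht).le) (sub_nonneg.2 (hmono t ht))

/-- If the Denjoy–Wolff point of a semigroup on the standard strip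
is the prime end `+∞`, then the generator has the form `G(z) = e^{-z} q(z)` with `Re q ≥ 0`. -/
theorem generator_form_on_strip_DW_plus_infinity
    (S : Set ℂ) (hS : S = {z : ℂ | |z.im| < Real.pi / 2})
    (F : ℝ → ℂ → ℂ) (G : ℂ → ℂ) (hFG : IsGeneratorOf S F G)
    (hDW : ∀ K : Set ℂ, K ⊆ S → IsCompact K → ∀ M : ℝ,
      ∀ᶠ t in Filter.atTop, ∀ z ∈ K, M ≤ (F t z).re) :
    ∃ q : ℂ → ℂ, DifferentiableOn ℂ q S ∧ (∀ z ∈ S, 0 ≤ (q z).re) ∧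
      ∀ z ∈ S, G z = Complex.exp (-z) * q z := by
  subst hS
  have hF0 : ∀ z ∈ {z : ℂ | |z.im| < π / 2}, F 0 z = z := hFG.1.2.1
  refine ⟨fun z ↦ exp z * G z,
    differentiable_exp.differentiableOn.mul (hFG.differentiableOn (isOpen_abs_im_lt _)),
    fun z hz ↦ ?_, fun z _ ↦ by rw [← mul_assoc, ← exp_add, neg_add_cancel, exp_zero, one_mul]⟩
  have hre : Tendsto (fun s ↦ (F s z).re) atTop atTop := tendsto_atTop.2 fun M ↦
    (hDW {z} (singleton_subset_iff.2 hz) isCompact_singleton M).mono fun s hs ↦ hs z rfl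
  have hderiv := (hasDerivAt_exp (F 0 z)).comp_hasDerivWithinAt 0 (hFG.hasDerivWithinAt hz)
  rw [hF0 z hz] at hderiv
  refine re_nonneg_of_hasDerivWithinAt_Ioi hderiv fun t ht ↦ ?_
  simpa only [Function.comp_apply, hF0 z hz] using hFG.1.re_exp_le_re_exp hz hre ht
end
end

section
/- Let D ⊆ ℂⁿ be a bounded convex domain, let G be an infinitesimal generator on D, and let (J_t)_{t≥0} be the nonlinear resolvents of G. Then the images J_t(D) contract exactly to the zero set of G: ⋂_{t≥0} J_t(D) = {z ∈ D : G(z) = 0} (this set may be empty). -/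
open Filter MeasureTheory Set Metric

noncomputable section

variable {E : Type*} [NormedAddCommGroup E] [NormedSpace ℂ E]

/-! If `z = J t w` for every `t ≥ 0`, then `J 0 = id` puts `z` in `D`, and `t • G z = z - w`
is a difference of two points of the bounded set `D` for every `t`, so `G z = 0`. Conversely, if
`G z = 0` then `z` itself solves `x - t • G x = z`, so it suffices that this equation has at most
one solution in `D`.

Uniqueness is proved with a Kobayashi-type pseudodistance `discDist` built from chains of
analytic discs: holomorphic self-maps of `D` do not increase it, it dominates `dist / (4 R)` when
`D ⊆ ball c R`, and the homothety of ratio `1 - b` towards an interior point `w` contracts it by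
a factor `1 - O(b)`. If `x - t • G x = y - t • G y = w`, then for small `h > 0` the map
`u ↦ F h u + b • (w - F h u)` with `b = h / (t + h)` moves `x` and `y` only by `o(h)`, because
`F h u = u + h • G u + o(h)`, while it contracts `discDist` by a factor `1 - c h`. Hence
`discDist D x y = 0`, and `x = y`. -/

def IsDiscStep (D : Set E) (u v : E) (σ : ℝ) : Prop :=
  ∃ φ : ℂ → E, DifferentiableOn ℂ φ (ball 0 1) ∧ MapsTo φ (ball 0 1) D ∧
    0 ≤ σ ∧ σ < 1 / 2 ∧ φ 0 = u ∧ φ σ = v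

inductive DiscChain (D : Set E) : E → E → ℝ → Prop
  | refl (u : E) : DiscChain D u u 0
  | step {u v w : E} {σ S : ℝ} :
      IsDiscStep D u v σ → DiscChain D v w S → DiscChain D u w (σ + S)

/-- A Kobayashi-type pseudodistance. The parameter length `σ` of a step stands in for the
Poincaré distance from `0` to `σ`, to which it is comparable on `[0, 1/2)`. -/
def discDist (D : Set E) (u v : E) : ℝ :=
  sInf {S | DiscChain D u v S}

theorem dist_apply_le_of_mapsTo_ball {φ : ℂ → E} {c : E} {R : ℝ}
    (hφ : DifferentiableOn ℂ φ (ball 0 1)) (hmaps : MapsTo φ (ball 0 1) (ball c R))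
    {ζ ξ : ℂ} (hξ : ‖ξ‖ ≤ 1 / 2) (hζ : dist ζ ξ < 1 / 2) :
    dist (φ ζ) (φ ξ) ≤ 4 * R * dist ζ ξ := by
  have hsub : ball ξ (1 / 2) ⊆ ball 0 1 :=
    ball_subset_ball' (by rw [dist_zero_right]; linarith)
  have hmaps' : MapsTo φ (ball ξ (1 / 2)) (closedBall (φ ξ) (2 * R)) := fun η hη => by
    have h₁ := hmaps (hsub hη)
    have h₂ := hmaps (hsub (mem_ball_self one_half_pos))
    rw [mem_ball] at h₁ h₂
    rw [mem_closedBall]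
    linarith [dist_triangle_right (φ η) (φ ξ) c]
  calc dist (φ ζ) (φ ξ) ≤ 2 * R / (1 / 2) * dist ζ ξ :=
        Complex.dist_le_div_mul_dist_of_mapsTo_ball (hφ.mono hsub) hmaps' hζ
    _ = 4 * R * dist ζ ξ := by ring

theorem Convex.ball_add_smul_sub_subset {D : Set E} (hD : Convex ℝ D) {w x : E} {r b : ℝ}
    (hw : ball w r ⊆ D) (hx : x ∈ D) (hb₀ : 0 < b) (hb₁ : b ≤ 1) :
    ball (x + b • (w - x)) (b * r) ⊆ D := by
  intro y hy
  have hy' : w + b⁻¹ • (y - (x + b • (w - x))) ∈ D := by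
    apply hw
    rw [mem_ball, dist_eq_norm, add_sub_cancel_left, norm_smul, norm_inv, Real.norm_eq_abs,
      abs_of_pos hb₀, inv_mul_lt_iff₀ hb₀, ← dist_eq_norm]
    exact hy
  convert hD hx hy' (by linarith : (0 : ℝ) ≤ 1 - b) hb₀.le (by ring) using 1
  rw [smul_add, smul_inv_smul₀ hb₀.ne']
  module

theorem isDiscStep_self {D : Set E} {u : E} (hu : u ∈ D) : IsDiscStep D u u 0 :=
  ⟨fun _ => u, differentiableOn_const _, fun _ _ => hu, le_rfl, by norm_num, rfl, rfl⟩

/-- A disc with a margin `ρ` in `D` can be bent by a linear term to pass through any point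
within `ρ s` of its value at `s`. -/
theorem isDiscStep_of_margin {D : Set E} {ψ : ℂ → E} {u v : E} {ρ s : ℝ}
    (hψ : DifferentiableOn ℂ ψ (ball 0 1))
    (hmargin : ∀ ζ ∈ ball (0 : ℂ) 1, ball (ψ ζ) ρ ⊆ D)
    (hu : ψ 0 = u) (hs₀ : 0 < s) (hs : s < 1 / 2) (hv : dist v (ψ s) < ρ * s) :
    IsDiscStep D u v s := by
  refine ⟨fun ζ => ψ ζ + (ζ / s) • (v - ψ s), by fun_prop, fun ζ hζ => ?_, hs₀.le, hs,
    by simp [hu], by simp [hs₀.ne']⟩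
  apply hmargin ζ hζ
  rw [mem_ball, dist_eq_norm, add_sub_cancel_left, norm_smul, norm_div, Complex.norm_real,
    Real.norm_of_nonneg hs₀.le, ← dist_eq_norm]
  calc ‖ζ‖ / s * dist v (ψ s) ≤ 1 / s * dist v (ψ s) := by
        gcongr
        exact (mem_ball_zero_iff.mp hζ).le
    _ < 1 / s * (ρ * s) := by gcongr
    _ = ρ := by field_simp

theorem isDiscStep_of_ball {D : Set E} {u v : E} {r : ℝ} (hball : ball u r ⊆ D)
    (huv : dist u v < r / 2) : IsDiscStep D u v (dist u v / r) := by
  have hr : 0 < r := by linarith [dist_nonneg (x := u) (y := v)]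
  rcases eq_or_ne v u with rfl | hvu
  · simpa using isDiscStep_self (hball (mem_ball_self hr))
  have hd : 0 < dist u v := dist_pos.mpr hvu.symm
  refine ⟨fun ζ => u + (ζ * ((r / dist u v : ℝ) : ℂ)) • (v - u), by fun_prop, ?_,
    by positivity, by rwa [div_lt_iff₀ hr, div_mul_eq_mul_div, one_mul], by simp, ?_⟩
  · intro ζ hζ
    apply hball
    rw [mem_ball, dist_eq_norm, add_sub_cancel_left, norm_smul, norm_mul, Complex.norm_real,
      Real.norm_eq_abs, abs_of_pos (by positivity), ← dist_eq_norm', mul_assoc,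
      div_mul_cancel₀ _ hd.ne']
    exact mul_lt_of_lt_one_left hr (mem_ball_zero_iff.mp hζ)
  · dsimp only
    rw [← Complex.ofReal_mul, div_mul_div_cancel₀ hr.ne', div_self hd.ne', Complex.ofReal_one,
      one_smul, add_sub_cancel]

namespace IsDiscStep

variable {D : Set E} {u v : E} {σ : ℝ}

theorem nonneg (h : IsDiscStep D u v σ) : 0 ≤ σ :=
  let ⟨_, _, _, hσ, _⟩ := h
  hσ

theorem dist_le {c : E} {R : ℝ} (hR : D ⊆ ball c R) (h : IsDiscStep D u v σ) :
    dist u v ≤ 4 * R * σ := by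
  obtain ⟨φ, hφ, hmaps, hσ₀, hσ, rfl, rfl⟩ := h
  have hσ' : dist (σ : ℂ) 0 = σ := by simp [abs_of_nonneg hσ₀]
  have := dist_apply_le_of_mapsTo_ball hφ (hmaps.mono_right hR)
    (by norm_num : ‖(0 : ℂ)‖ ≤ 1 / 2) (by rwa [hσ'])
  rwa [hσ', dist_comm] at this

theorem map {D' : Set E} {f : E → E} (hf : DifferentiableOn ℂ f D) (hfD : MapsTo f D D')
    (h : IsDiscStep D u v σ) : IsDiscStep D' (f u) (f v) σ := by
  obtain ⟨φ, hφ, hmaps, hσ₀, hσ, rfl, rfl⟩ := h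
  exact ⟨f ∘ φ, hf.comp hφ hmaps, hfD.comp hmaps, hσ₀, hσ, rfl, rfl⟩

/-- For the homothety `m u = u + b • (w - u)`, the disc `m ∘ φ` has margin `b r` in `D` by
convexity, and by the Schwarz lemma it moves by only `O(ε σ)` between the parameters
`(1 - ε) σ` and `σ`; so it can be bent to reach `m v` already at `(1 - ε) σ`. -/
theorem homothety (hD : Convex ℝ D) {c w : E} {R r b : ℝ} (hR : D ⊆ ball c R)
    (hw : ball w r ⊆ D) (hr : 0 < r) (hrR : r ≤ R) (hb₀ : 0 < b) (hb₁ : b ≤ 1)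
    (h : IsDiscStep D u v σ) :
    IsDiscStep D (u + b • (w - u)) (v + b • (w - v)) ((1 - b * r / (16 * R)) * σ) := by
  set m : E → E := fun x => x + b • (w - x)
  set ε := b * r / (16 * R)
  have hR₀ : 0 < R := hr.trans_le hrR
  have hε₀ : 0 < ε := by positivity
  have hε : ε ≤ 1 / 16 := by
    rw [div_le_iff₀ (by positivity)]
    nlinarith
  obtain ⟨φ, hφ, hmaps, hσ₀, hσ, rfl, rfl⟩ := h
  have hmargin : ∀ ζ ∈ ball (0 : ℂ) 1, ball (m (φ ζ)) (b * r) ⊆ D := fun ζ hζ =>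
    hD.ball_add_smul_sub_subset hw (hmaps hζ) hb₀ hb₁
  rcases hσ₀.eq_or_lt with rfl | hσpos
  · simpa using isDiscStep_self (hmargin 0 (mem_ball_self one_pos) (mem_ball_self (by positivity)))
  set σ' := (1 - ε) * σ
  have hσσ' : dist (σ : ℂ) σ' = ε * σ := by
    rw [Complex.dist_eq, ← Complex.ofReal_sub, Complex.norm_real, Real.norm_eq_abs,
      abs_of_nonneg (by nlinarith)]
    ring
  have hmove : dist (φ σ) (φ σ') ≤ 4 * R * (ε * σ) := by
    rw [← hσσ']
    exact dist_apply_le_of_mapsTo_ball hφ (hmaps.mono_right hR)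
      (by rw [Complex.norm_real, Real.norm_of_nonneg (by nlinarith)]; nlinarith)
      (by rw [hσσ']; nlinarith)
  refine isDiscStep_of_margin (ψ := m ∘ φ) (by fun_prop) hmargin rfl (by nlinarith)
    (by nlinarith) ?_
  calc dist (m (φ σ)) (m (φ σ')) = (1 - b) * dist (φ σ) (φ σ') := by
        simp only [m, dist_eq_norm]
        rw [← Real.norm_of_nonneg (by linarith : 0 ≤ 1 - b), ← norm_smul]
        congr 1
        module
    _ ≤ 4 * R * (ε * σ) := by nlinarith [dist_nonneg (x := φ σ) (y := φ σ')]
    _ < b * r * σ' := by simp only [σ', ε]; field_simp; nlinarith [mul_pos hb₀ hr]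

end IsDiscStep

namespace DiscChain

variable {D : Set E} {u v w : E} {S T : ℝ}

theorem nonneg (h : DiscChain D u v S) : 0 ≤ S := by
  induction h with
  | refl => rfl
  | step hstep _ ih => exact add_nonneg hstep.nonneg ih

theorem trans (h₁ : DiscChain D u v S) (h₂ : DiscChain D v w T) : DiscChain D u w (S + T) := by
  induction h₁ with
  | refl => simpa using h₂
  | step hstep _ ih => simpa [add_assoc] using step hstep (ih h₂)

theorem of_isDiscStep {σ : ℝ} (h : IsDiscStep D u v σ) : DiscChain D u v σ := by
  simpa using step h (refl v)

theorem dist_le {c : E} {R : ℝ} (hR : D ⊆ ball c R) (h : DiscChain D u v S) :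
    dist u v ≤ 4 * R * S := by
  induction h with
  | refl => simp
  | @step x y z σ S hstep _ ih => linarith [dist_triangle x y z, hstep.dist_le hR]

theorem map {D' : Set E} {f : E → E} (hf : DifferentiableOn ℂ f D) (hfD : MapsTo f D D')
    (h : DiscChain D u v S) : DiscChain D' (f u) (f v) S := by
  induction h with
  | refl => exact refl _
  | step hstep _ ih => exact step (hstep.map hf hfD) ih

theorem homothety (hD : Convex ℝ D) {c w : E} {R r b : ℝ} (hR : D ⊆ ball c R)
    (hw : ball w r ⊆ D) (hr : 0 < r) (hrR : r ≤ R) (hb₀ : 0 < b) (hb₁ : b ≤ 1)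
    (h : DiscChain D u v S) :
    DiscChain D (u + b • (w - u)) (v + b • (w - v)) ((1 - b * r / (16 * R)) * S) := by
  induction h with
  | refl => simpa using refl _
  | step hstep _ ih =>
    rw [mul_add]
    exact step (hstep.homothety hD hR hw hr hrR hb₀ hb₁) ih

theorem exists_of_isPreconnected (hDo : IsOpen D) (hDc : IsPreconnected D) (hu : u ∈ D)
    (hv : v ∈ D) : ∃ S, DiscChain D u v S := by
  refine hDc.induction₂' (fun u v => ∃ S, DiscChain D u v S) (fun x hx => ?_)
    (fun _ _ _ _ _ _ ⟨S, hS⟩ ⟨T, hT⟩ => ⟨S + T, hS.trans hT⟩) hu hv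
  obtain ⟨r, hr, hball⟩ := Metric.isOpen_iff.mp hDo x hx
  filter_upwards [nhdsWithin_le_nhds (ball_mem_nhds x (by positivity : 0 < r / 4))] with y hy
  rw [mem_ball, dist_comm] at hy
  have hball' : ball y (r / 2) ⊆ D :=
    (ball_subset_ball' (by rw [dist_comm]; linarith)).trans hball
  exact ⟨⟨_, of_isDiscStep (isDiscStep_of_ball hball (by linarith))⟩,
    ⟨_, of_isDiscStep (isDiscStep_of_ball hball' (by rw [dist_comm]; linarith))⟩⟩

end DiscChain

section discDist

variable {D : Set E} {u v w : E}

theorem bddBelow_discChain (D : Set E) (u v : E) : BddBelow {S | DiscChain D u v S} :=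
  ⟨0, fun _ hS => DiscChain.nonneg hS⟩

theorem discDist_nonneg (D : Set E) (u v : E) : 0 ≤ discDist D u v :=
  Real.sInf_nonneg fun _ hS => DiscChain.nonneg hS

theorem DiscChain.discDist_le {S : ℝ} (h : DiscChain D u v S) : discDist D u v ≤ S :=
  csInf_le (bddBelow_discChain D u v) h

theorem discDist_le_of_ball {r : ℝ} (hball : ball u r ⊆ D) (huv : dist u v < r / 2) :
    discDist D u v ≤ dist u v / r :=
  (DiscChain.of_isDiscStep (isDiscStep_of_ball hball huv)).discDist_le

theorem discDist_triangle (huv : ∃ S, DiscChain D u v S) (hvw : ∃ S, DiscChain D v w S) :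
    discDist D u w ≤ discDist D u v + discDist D v w := by
  refine le_of_forall_pos_lt_add fun δ hδ => ?_
  obtain ⟨S, hS, hSlt⟩ := Real.lt_sInf_add_pos (s := {S | DiscChain D u v S}) huv (half_pos hδ)
  obtain ⟨T, hT, hTlt⟩ := Real.lt_sInf_add_pos (s := {S | DiscChain D v w S}) hvw (half_pos hδ)
  have := (DiscChain.trans hS hT).discDist_le
  unfold discDist at *
  linarith

theorem discDist_le_mul_of_forall {u' v' : E} {a : ℝ} (ha : 0 ≤ a)
    (huv : ∃ S, DiscChain D u v S) (h : ∀ S, DiscChain D u v S → DiscChain D u' v' (a * S)) :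
    discDist D u' v' ≤ a * discDist D u v := by
  rw [discDist, discDist, ← smul_eq_mul, ← Real.sInf_smul_of_nonneg ha]
  refine csInf_le_csInf (bddBelow_discChain D u' v') (Set.Nonempty.image _ huv) ?_
  rintro _ ⟨S, hS, rfl⟩
  exact h S hS

theorem dist_le_discDist {c : E} {R : ℝ} (hR : D ⊆ ball c R) (hR₀ : 0 ≤ R)
    (huv : ∃ S, DiscChain D u v S) : dist u v ≤ 4 * R * discDist D u v := by
  rw [discDist, ← smul_eq_mul, ← Real.sInf_smul_of_nonneg (by positivity)]
  refine le_csInf (Set.Nonempty.image _ huv) ?_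
  rintro _ ⟨S, hS, rfl⟩
  exact hS.dist_le hR

end discDist

theorem dist_add_smul_sub_le {V : Type*} [NormedAddCommGroup V] [NormedSpace ℝ V]
    {x p g w : V} {t h : ℝ} (ht : 0 < t) (hh : 0 < h) (hw : x - t • g = w) :
    dist x (p + (h / (t + h)) • (w - p)) ≤ h * ‖h⁻¹ • (p - x) - g‖ := by
  have key : x - (p + (h / (t + h)) • (w - p)) = (t / (t + h)) • (h • g - (p - x)) := by
    subst hw
    match_scalars <;> field_simp <;> ring
  have hnorm : h * ‖h⁻¹ • (p - x) - g‖ = ‖h • g - (p - x)‖ :=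
    calc h * ‖h⁻¹ • (p - x) - g‖ = ‖h • (h⁻¹ • (p - x) - g)‖ := by
          rw [norm_smul, Real.norm_of_nonneg hh.le]
      _ = ‖h • g - (p - x)‖ := by rw [smul_sub, smul_inv_smul₀ hh.ne', norm_sub_rev]
  rw [dist_eq_norm, key, hnorm, norm_smul, Real.norm_of_nonneg (by positivity)]
  exact mul_le_of_le_one_left (norm_nonneg _) ((div_le_one (by positivity)).mpr (by linarith))

theorem discDist_le_of_homothety_comp {D : Set E} (hDo : IsOpen D) (hDc : Convex ℝ D)
    {c w : E} {R r b : ℝ} (hR : D ⊆ ball c R) (hw : ball w r ⊆ D) (hr : 0 < r) (hrR : r ≤ R)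
    (hb₀ : 0 < b) (hb₁ : b ≤ 1) {f : E → E} (hf : DifferentiableOn ℂ f D)
    (hfD : MapsTo f D D) {x y : E} (hx : ball x r ⊆ D) (hy : ball y r ⊆ D)
    (hΓx : dist x (f x + b • (w - f x)) < r / 4)
    (hΓy : dist y (f y + b • (w - f y)) < r / 4) :
    b * r / (16 * R) * discDist D x y ≤
      2 * (dist x (f x + b • (w - f x)) + dist y (f y + b • (w - f y))) / r := by
  set Γ : E → E := fun u => f u + b • (w - f u)
  change dist x (Γ x) < r / 4 at hΓx
  change dist y (Γ y) < r / 4 at hΓy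
  change b * r / (16 * R) * discDist D x y ≤ 2 * (dist x (Γ x) + dist y (Γ y)) / r
  have hxD : x ∈ D := hx (mem_ball_self hr)
  have hyD : y ∈ D := hy (mem_ball_self hr)
  have hΓ : ∀ u ∈ D, Γ u ∈ D := fun u hu =>
    hDc.ball_add_smul_sub_subset hw (hfD hu) hb₀ hb₁ (mem_ball_self (by positivity))
  have hchain : ∀ u ∈ D, ∀ v ∈ D, ∃ S, DiscChain D u v S := fun u hu v hv =>
    DiscChain.exists_of_isPreconnected hDo hDc.isPreconnected hu hv
  have hR₀ : 0 < R := hr.trans_le hrR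
  have hε : b * r / (16 * R) ≤ 1 := by
    rw [div_le_iff₀ (by positivity)]
    nlinarith
  have hxΓx : discDist D x (Γ x) ≤ dist x (Γ x) / r :=
    discDist_le_of_ball hx (by linarith)
  have hΓyy : discDist D (Γ y) y ≤ dist y (Γ y) / (r / 2) := by
    rw [dist_comm y] at hΓy ⊢
    exact discDist_le_of_ball ((ball_subset_ball' (by linarith)).trans hy) (by linarith)
  have hΓxΓy : discDist D (Γ x) (Γ y) ≤ (1 - b * r / (16 * R)) * discDist D x y :=
    discDist_le_mul_of_forall (by linarith) (hchain x hxD y hyD) fun S hS =>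
      (hS.map hf hfD).homothety hDc hR hw hr hrR hb₀ hb₁
  have htri : discDist D x y ≤
      discDist D x (Γ x) + discDist D (Γ x) (Γ y) + discDist D (Γ y) y := by
    have h₁ := discDist_triangle (hchain x hxD _ (hΓ x hxD)) (hchain _ (hΓ x hxD) y hyD)
    have h₂ := discDist_triangle (hchain _ (hΓ x hxD) _ (hΓ y hyD)) (hchain _ (hΓ y hyD) y hyD)
    linarith
  have hsum : dist x (Γ x) / r + dist y (Γ y) / (r / 2) ≤
      2 * (dist x (Γ x) + dist y (Γ y)) / r := by
    rw [div_div_eq_mul_div, ← sub_nonneg]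
    ring_nf
    positivity
  linarith

theorem discDist_le_of_sub_smul_eq {D : Set E} (hDo : IsOpen D) (hDc : Convex ℝ D)
    {c w : E} {R r : ℝ} (hR : D ⊆ ball c R) (hw : ball w r ⊆ D) (hr : 0 < r) (hrR : r ≤ R)
    {f : E → E} (hf : DifferentiableOn ℂ f D) (hfD : MapsTo f D D) {x y gx gy : E}
    (hx : ball x r ⊆ D) (hy : ball y r ⊆ D) {t h : ℝ} (ht : 0 < t) (hh : 0 < h)
    (hht : h ≤ t) (hxw : x - t • gx = w) (hyw : y - t • gy = w)
    (hqx : h * ‖h⁻¹ • (f x - x) - gx‖ < r / 4)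
    (hqy : h * ‖h⁻¹ • (f y - y) - gy‖ < r / 4) :
    discDist D x y ≤
      64 * R * t / r ^ 2 * (‖h⁻¹ • (f x - x) - gx‖ + ‖h⁻¹ • (f y - y) - gy‖) := by
  set b := h / (t + h)
  have hR₀ : 0 < R := hr.trans_le hrR
  have hb₀ : 0 < b := by positivity
  have hb₁ : b ≤ 1 := (div_le_one (by positivity)).mpr (by linarith)
  have hb : h / (2 * t) ≤ b := div_le_div_of_nonneg_left hh.le (by positivity) (by linarith)
  have hdx := dist_add_smul_sub_le (p := f x) ht hh hxw
  have hdy := dist_add_smul_sub_le (p := f y) ht hh hyw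
  have hmain := discDist_le_of_homothety_comp hDo hDc hR hw hr hrR hb₀ hb₁ hf hfD hx hy
    (hdx.trans_lt hqx) (hdy.trans_lt hqy)
  have hlow : h * r / (32 * R * t) * discDist D x y ≤
      2 * (h * ‖h⁻¹ • (f x - x) - gx‖ + h * ‖h⁻¹ • (f y - y) - gy‖) / r := by
    refine le_trans ?_ (hmain.trans (by gcongr))
    refine mul_le_mul_of_nonneg_right ?_ (discDist_nonneg D x y)
    calc h * r / (32 * R * t) = h / (2 * t) * r / (16 * R) := by field_simp; ring
      _ ≤ b * r / (16 * R) := by gcongr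
  refine (mul_le_mul_iff_of_pos_left (by positivity : 0 < h * r / (32 * R * t))).mp
    (hlow.trans_eq ?_)
  field_simp
  ring

theorem exists_ball_subset_of_isOpen {X : Type*} [PseudoMetricSpace X] {D : Set X}
    (hDo : IsOpen D) {x y w : X} (hx : x ∈ D)
    (hy : y ∈ D) (hw : w ∈ D) {R : ℝ} (hR : 0 < R) :
    ∃ r, 0 < r ∧ r ≤ R ∧ ball x r ⊆ D ∧ ball y r ⊆ D ∧ ball w r ⊆ D := by
  obtain ⟨rx, hrx, hx'⟩ := Metric.isOpen_iff.mp hDo x hx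
  obtain ⟨ry, hry, hy'⟩ := Metric.isOpen_iff.mp hDo y hy
  obtain ⟨rw, hrw, hw'⟩ := Metric.isOpen_iff.mp hDo w hw
  refine ⟨min (min rx ry) (min rw R), by positivity, by simp, ?_, ?_, ?_⟩
  · exact (ball_subset_ball (by simp)).trans hx'
  · exact (ball_subset_ball (by simp)).trans hy'
  · exact (ball_subset_ball (by simp)).trans hw'

open scoped Topology in
theorem IsGeneratorOf.eq_of_sub_smul_eq {D : Set E} {F : ℝ → E → E} {G : E → E}
    (hgen : IsGeneratorOf D F G) (hDo : IsOpen D) (hDc : Convex ℝ D) {c : E} {R : ℝ}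
    (hR : D ⊆ ball c R) {t : ℝ} (ht : 0 ≤ t) {x y : E} (hx : x ∈ D) (hy : y ∈ D)
    (hw : x - t • G x ∈ D) (heq : x - t • G x = y - t • G y) : x = y := by
  rcases ht.eq_or_lt with rfl | ht
  · simpa using heq
  obtain ⟨⟨hF, -, -, -⟩, hlim⟩ := hgen
  set w := x - t • G x
  have hR₀ : 0 < R := pos_of_mem_ball (hR hx)
  obtain ⟨r, hr, hrR, hxr, hyr, hwr⟩ := exists_ball_subset_of_isOpen hDo hx hy hw hR₀
  set q : E → ℝ → ℝ := fun z h => ‖h⁻¹ • (F h z - z) - G z‖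
  have hq : ∀ z ∈ D, Tendsto (q z) (𝓝[>] 0) (𝓝 0) := fun z hz =>
    tendsto_iff_norm_sub_tendsto_zero.mp (hlim.tendsto_at hz)
  have hhq : ∀ z ∈ D, ∀ᶠ h in 𝓝[>] 0, h * q z h < r / 4 := fun z hz =>
    (by simpa using (tendsto_nhdsWithin_of_tendsto_nhds tendsto_id).mul (hq z hz) :
      Tendsto (fun h => h * q z h) (𝓝[>] 0) (𝓝 0)).eventually (gt_mem_nhds (by positivity))
  have hest : ∀ᶠ h in 𝓝[>] 0, discDist D x y ≤ 64 * R * t / r ^ 2 * (q x h + q y h) := by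
    filter_upwards [Ioc_mem_nhdsGT ht, hhq x hx, hhq y hy] with h ⟨hh, hht⟩ hqx hqy
    exact discDist_le_of_sub_smul_eq hDo hDc hR hwr hr hrR (hF h hh.le).2 (hF h hh.le).1 hxr hyr
      ht hh hht rfl heq.symm hqx hqy
  have hlim0 : Tendsto (fun h => 64 * R * t / r ^ 2 * (q x h + q y h)) (𝓝[>] 0) (𝓝 0) := by
    simpa using ((hq x hx).add (hq y hy)).const_mul (64 * R * t / r ^ 2)
  have hk : discDist D x y ≤ 0 := ge_of_tendsto hlim0 hest
  have hchain := DiscChain.exists_of_isPreconnected hDo hDc.isPreconnected hx hy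
  exact dist_le_zero.mp ((dist_le_discDist hR hR₀.le hchain).trans
    (mul_nonpos_of_nonneg_of_nonpos (by positivity) hk))

namespace IsResolventAt

variable {D : Set E} {G J : E → E} {t : ℝ}

theorem apply_eq_self_of_zero (hJ : IsResolventAt D G 0 J) {w : E} (hw : w ∈ D) : J w = w := by
  simpa using hJ.2.2 w hw

theorem apply_sub_smul {F : ℝ → E → E} (hJ : IsResolventAt D G t J)
    (hgen : IsGeneratorOf D F G) (hDo : IsOpen D) (hDc : Convex ℝ D) {c : E} {R : ℝ}
    (hR : D ⊆ ball c R) (ht : 0 ≤ t) {x : E} (hx : x ∈ D) (hw : x - t • G x ∈ D) :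
    J (x - t • G x) = x := by
  have hres := hJ.2.2 _ hw
  exact hgen.eq_of_sub_smul_eq hDo hDc hR ht (hJ.1 hw) hx (hres.symm ▸ hw) hres

end IsResolventAt

theorem eq_zero_of_forall_mem_resolvent_image {D : Set E} {G : E → E}
    (hD : Bornology.IsBounded D) {J : ℝ → E → E}
    (hJ : ∀ t : ℝ, 0 ≤ t → IsResolventAt D G t (J t)) {z : E} (hz : z ∈ D)
    (hzJ : ∀ t : ℝ, 0 ≤ t → z ∈ J t '' D) : G z = 0 := by
  have hbound : ∀ t : ℝ, 0 ≤ t → t * ‖G z‖ ≤ diam D := by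
    intro t ht
    obtain ⟨w, hw, rfl⟩ := hzJ t ht
    have hres : J t w - w = t • G (J t w) :=
      sub_eq_iff_eq_add'.mpr (sub_eq_iff_eq_add.mp ((hJ t ht).2.2 w hw))
    calc t * ‖G (J t w)‖ = dist (J t w) w := by
          rw [dist_eq_norm, hres, norm_smul, Real.norm_of_nonneg ht]
      _ ≤ diam D := dist_le_diam_of_mem hD hz hw
  by_contra hGz
  have hpos : 0 < ‖G z‖ := norm_pos_iff.mpr hGz
  have := hbound ((diam D + 1) / ‖G z‖) (by positivity)
  rw [div_mul_cancel₀ _ hpos.ne'] at this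
  linarith

theorem resolvent_images_contract_to_zero_set_general
    (n : ℕ) (D : Set (EuclideanSpace ℂ (Fin n)))
    (hDopen : IsOpen D) (hDconv : Convex ℝ D)
    (hDbdd : Bornology.IsBounded D)
    (G : EuclideanSpace ℂ (Fin n) → EuclideanSpace ℂ (Fin n)) (hGgen : IsInfGen D G)
    (J : ℝ → EuclideanSpace ℂ (Fin n) → EuclideanSpace ℂ (Fin n))
    (hJ : ∀ t : ℝ, 0 ≤ t → IsResolventAt D G t (J t)) :
    (⋂ t ∈ Set.Ici (0 : ℝ), J t '' D) = {z ∈ D | G z = 0} := by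
  obtain ⟨F, hF⟩ := hGgen
  obtain ⟨R, -, hR⟩ := hDbdd.subset_ball_lt 0 0
  ext z
  simp only [mem_iInter₂, mem_Ici]
  constructor
  · intro hzJ
    have hz : z ∈ D := by
      obtain ⟨w, hw, rfl⟩ := hzJ 0 le_rfl
      rwa [(hJ 0 le_rfl).apply_eq_self_of_zero hw]
    exact ⟨hz, eq_zero_of_forall_mem_resolvent_image hDbdd hJ hz hzJ⟩
  · rintro ⟨hz, hGz⟩ t ht
    refine ⟨z, hz, ?_⟩
    simpa [hGz] using (hJ t ht).apply_sub_smul hF hDopen hDconv hR ht hz (by simpa [hGz])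

/-- The images of the nonlinear resolvents of an infinitesimal
generator on a bounded convex domain contract exactly to the zero set of `G`. -/
theorem resolvent_images_contract_to_zero_set
    (n : ℕ) (D : Set (EuclideanSpace ℂ (Fin n)))
    (hDopen : IsOpen D) (hDne : D.Nonempty) (hDconv : Convex ℝ D)
    (hDbdd : Bornology.IsBounded D)
    (G : EuclideanSpace ℂ (Fin n) → EuclideanSpace ℂ (Fin n)) (hGgen : IsInfGen D G)
    (J : ℝ → EuclideanSpace ℂ (Fin n) → EuclideanSpace ℂ (Fin n))
    (hJ : ∀ t : ℝ, 0 ≤ t → IsResolventAt D G t (J t)) :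
    (⋂ t ∈ Set.Ici (0 : ℝ), J t '' D) = {z ∈ D | G z = 0} :=
  resolvent_images_contract_to_zero_set_general n D hDopen hDconv hDbdd G hGgen J hJ
end
end

section
/- Let 𝔻 be the open unit disk, τ ∈ 𝔻̄ (the closed unit disk), and p : 𝔻 → ℂ holomorphic with Re p(z) ≥ 0 for all z ∈ 𝔻, and set G(z) = (τ − z)(1 − τ̄ z)p(z), which is an infinitesimal generator on 𝔻 with nonlinear resolvents (J_t)_{t≥0}. Then for every t > 0 there exists a holomorphic function p_t : 𝔻 → ℂ with Re p_t(z) ≥ 0 for all z ∈ 𝔻 such that J_t(z) − z = t·(τ − z)(1 − τ̄ z)·p_t(z) for all z ∈ 𝔻; equivalently, G ∘ J_t = (τ − z)(1 − τ̄ z)p_t(z) with p_t(z) = (1/t)·(z − J_t(z))/((z − τ)(1 − τ̄ z)) wherever the denominator is nonzero. -/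
open Filter MeasureTheory Set Metric

noncomputable section

variable {E : Type*} [NormedAddCommGroup E] [NormedSpace ℂ E]

/-!
Write `w = J_t z` and `q = p w`. The resolvent equation `z = w - t (τ - w)(1 - τ̄ w) q` gives the
factorisation `(τ - z)(1 - τ̄ z) = (τ - w)(1 - τ̄ w)(1 + t q K)` with `K = 1 + |τ|² - τ̄ (w + z)`,
and `Re K ≥ (1 - |τ|)² + |τ| (2 - |w| - |z|) > 0`. Hence `1 + t q K` never vanishes and
`p_t = q / (1 + t q K) = (q⁻¹ + t K)⁻¹` takes values in the right half-plane, which is closed under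
addition and inversion.
-/

open ComplexConjugate

namespace Complex

lemma re_inv_nonneg {z : ℂ} (hz : 0 ≤ z.re) : 0 ≤ z⁻¹.re := by
  rw [inv_re]
  exact div_nonneg hz (normSq_nonneg z)

lemma one_add_mul_mul_ne_zero {q K : ℂ} {s : ℝ} (hq : 0 ≤ q.re) (hs : 0 ≤ s) (hK : 0 < K.re) :
    1 + s * q * K ≠ 0 := by
  intro h
  have hre : (conj K * (1 + s * q * K)).re = K.re + s * normSq K * q.re := by
    rw [show conj K * (1 + s * q * K) = conj K + ((s * normSq K : ℝ) : ℂ) * q by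
      push_cast; rw [← mul_conj]; ring]
    simp only [add_re, conj_re, re_ofReal_mul]
  rw [h, mul_zero, zero_re] at hre
  nlinarith [mul_nonneg (mul_nonneg hs (normSq_nonneg K)) hq]

lemma re_div_one_add_mul_mul_nonneg {q K : ℂ} {s : ℝ} (hq : 0 ≤ q.re) (hs : 0 ≤ s)
    (hK : 0 ≤ K.re) : 0 ≤ (q / (1 + s * q * K)).re := by
  rcases eq_or_ne q 0 with rfl | hq0
  · simp
  have hinv : q / (1 + s * q * K) = (q⁻¹ + s * K)⁻¹ := by
    rw [show q⁻¹ + s * K = (1 + s * q * K) / q by field_simp, inv_div]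
  rw [hinv]
  refine re_inv_nonneg ?_
  rw [add_re, re_ofReal_mul]
  exact add_nonneg (re_inv_nonneg hq) (mul_nonneg hs hK)

lemma re_one_add_conj_mul_sub_conj_mul_add_pos (τ : ℂ) {w z : ℂ} (hw : ‖w‖ < 1) (hz : ‖z‖ < 1) :
    0 < (1 + conj τ * τ - conj τ * (w + z)).re := by
  have hτw := re_le_norm (conj τ * w)
  have hτz := re_le_norm (conj τ * z)
  rw [norm_mul, norm_conj] at hτw hτz
  have hττ : (conj τ * τ).re = ‖τ‖ ^ 2 := by
    rw [mul_comm, mul_conj, ofReal_re, normSq_eq_norm_sq]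
  simp only [sub_re, add_re, one_re, mul_add, hττ]
  nlinarith [norm_nonneg τ, sq_nonneg (1 - ‖τ‖), mul_nonneg (norm_nonneg τ) (sub_pos.2 hw).le,
    mul_nonneg (norm_nonneg τ) (sub_pos.2 hz).le]

lemma sub_eq_berkson_porta_of_resolvent_eq {τ w z q t : ℂ}
    (hz : w - t * ((τ - w) * (1 - conj τ * w) * q) = z)
    (hden : 1 + t * q * (1 + conj τ * τ - conj τ * (w + z)) ≠ 0) :
    w - z = t * ((τ - z) * (1 - conj τ * z) *
      (q / (1 + t * q * (1 + conj τ * τ - conj τ * (w + z))))) := by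
  rw [mul_div_assoc', mul_div_assoc', eq_div_iff hden]
  subst hz
  ring

end Complex

open Complex

theorem resolvent_herglotz_field_berkson_porta_form_general
    (τ : ℂ)
    (p : ℂ → ℂ) (hp : DifferentiableOn ℂ p (Metric.ball (0 : ℂ) 1))
    (hpre : ∀ z ∈ Metric.ball (0 : ℂ) 1, 0 ≤ (p z).re)
    (G : ℂ → ℂ)
    (hG : ∀ z : ℂ, G z = (τ - z) * (1 - (starRingEnd ℂ) τ * z) * p z)
    (J : ℝ → ℂ → ℂ)
    (hJ : ∀ t : ℝ, 0 ≤ t → IsResolventAt (Metric.ball (0 : ℂ) 1) G t (J t)) :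
    ∀ t : ℝ, 0 < t → ∃ pt : ℂ → ℂ,
      DifferentiableOn ℂ pt (Metric.ball (0 : ℂ) 1) ∧
      (∀ z ∈ Metric.ball (0 : ℂ) 1, 0 ≤ (pt z).re) ∧
      ∀ z ∈ Metric.ball (0 : ℂ) 1,
        J t z - z = (t : ℂ) * ((τ - z) * (1 - (starRingEnd ℂ) τ * z) * pt z) := by
  intro t ht
  obtain ⟨hmaps, hdiff, hres⟩ := hJ t ht.le
  set K : ℂ → ℂ := fun z => 1 + conj τ * τ - conj τ * (J t z + z)
  have hK : ∀ z ∈ ball (0 : ℂ) 1, 0 < (K z).re := fun z hz =>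
    re_one_add_conj_mul_sub_conj_mul_add_pos τ (mem_ball_zero_iff.1 (hmaps hz))
      (mem_ball_zero_iff.1 hz)
  have hden : ∀ z ∈ ball (0 : ℂ) 1, 1 + t * p (J t z) * K z ≠ 0 := fun z hz =>
    one_add_mul_mul_ne_zero (hpre _ (hmaps hz)) ht.le (hK z hz)
  refine ⟨fun z => p (J t z) / (1 + t * p (J t z) * K z), ?_, fun z hz => ?_, fun z hz => ?_⟩
  · have hpJ : DifferentiableOn ℂ (fun z => p (J t z)) (ball 0 1) := hp.comp hdiff hmaps
    exact hpJ.div (by fun_prop) hden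
  · exact re_div_one_add_mul_mul_nonneg (hpre _ (hmaps hz)) ht.le (hK z hz).le
  · have hJz := hres z hz
    rw [real_smul, hG] at hJz
    exact sub_eq_berkson_porta_of_resolvent_eq hJz (hden z hz)

/-- For a Berkson–Porta generator `G(z) = (τ-z)(1-τ̄z)p(z)` on the unit
disk with resolvents `(J_t)`, for each `t > 0` the Herglotz vector field `G ∘ J_t` has the
same Berkson–Porta form: `J_t(z) - z = t (τ-z)(1-τ̄z) p_t(z)` for some holomorphic `p_t`
with `Re p_t ≥ 0`. -/
theorem resolvent_herglotz_field_berkson_porta_form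
    (τ : ℂ) (hτ : τ ∈ Metric.closedBall (0 : ℂ) 1)
    (p : ℂ → ℂ) (hp : DifferentiableOn ℂ p (Metric.ball (0 : ℂ) 1))
    (hpre : ∀ z ∈ Metric.ball (0 : ℂ) 1, 0 ≤ (p z).re)
    (G : ℂ → ℂ)
    (hG : ∀ z : ℂ, G z = (τ - z) * (1 - (starRingEnd ℂ) τ * z) * p z)
    (J : ℝ → ℂ → ℂ)
    (hJ : ∀ t : ℝ, 0 ≤ t → IsResolventAt (Metric.ball (0 : ℂ) 1) G t (J t)) :
    ∀ t : ℝ, 0 < t → ∃ pt : ℂ → ℂ,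
      DifferentiableOn ℂ pt (Metric.ball (0 : ℂ) 1) ∧
      (∀ z ∈ Metric.ball (0 : ℂ) 1, 0 ≤ (pt z).re) ∧
      ∀ z ∈ Metric.ball (0 : ℂ) 1,
        J t z - z = (t : ℂ) * ((τ - z) * (1 - (starRingEnd ℂ) τ * z) * pt z) :=
  resolvent_herglotz_field_berkson_porta_form_general τ p hp hpre G hG J hJ
end
end
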